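/- arXiv:1102.5633 — 2 statements merged into one kernel-verified Lean document; each statement's English description precedes it below -/
import Mathlib

section
/- There exists a constant e_3 > 0, depending only on d (one may take e_3 = min{2^{−d}, 2^{−2d} d^{−d/2}}), such that for all u, v ∈ [0,1]^d, vol[G(u,v)] ≥ e_3 · vol[H(u,v)]. -/
/-! Write `r = ‖v - u‖`; since `u, v ∈ [0,1]^d`, `r ≤ √d`. The ball `H(u,v)` lies in the cube of
side `2r` centred at `u`, so `vol H ≤ (2r)^d`. A cube of side `s = r/√d ≤ 1` containing `u` has all
its points within `√d s = r` of `u`, and it can be slid along the axes into `[0,1]^d`, so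
`vol G ≥ s^d = (2√d)^{-d} (2r)^d ≥ e₃ vol H`. -/

open MeasureTheory Finset

/-- The unit cube `[0,1]^d` in `ℝ^d`. -/
def unitCube (d : ℕ) : Set (EuclideanSpace ℝ (Fin d)) :=
  WithLp.ofLp ⁻¹' Set.univ.pi fun _ => Set.Icc (0 : ℝ) 1

/-- `H(u,v)`: the closed Euclidean ball centered at `u` of radius `‖v - u‖`. -/
def Hset {d : ℕ} (u v : EuclideanSpace ℝ (Fin d)) : Set (EuclideanSpace ℝ (Fin d)) :=
  Metric.closedBall u ‖v - u‖

/-- `G(u,v) = H(u,v) ∩ [0,1]^d`. -/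
def Gset {d : ℕ} (u v : EuclideanSpace ℝ (Fin d)) : Set (EuclideanSpace ℝ (Fin d)) :=
  Hset u v ∩ unitCube d

namespace EuclideanSpace

variable {ι : Type*} [Fintype ι]

theorem dist_le_sqrt_card_mul {x y : EuclideanSpace ℝ ι} {s : ℝ} (hs : 0 ≤ s)
    (h : ∀ i, dist (x i) (y i) ≤ s) : dist x y ≤ √(Fintype.card ι) * s := by
  rw [EuclideanSpace.dist_eq, ← Real.sqrt_sq hs, ← Real.sqrt_mul (Nat.cast_nonneg _)]
  refine Real.sqrt_le_sqrt ?_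
  calc ∑ i, dist (x i) (y i) ^ 2 ≤ ∑ _i : ι, s ^ 2 :=
        Finset.sum_le_sum fun i _ => pow_le_pow_left₀ dist_nonneg (h i) 2
    _ = Fintype.card ι * s ^ 2 := by simp

theorem volume_preimage_ofLp {s : Set (ι → ℝ)} (hs : NullMeasurableSet s) :
    volume (WithLp.ofLp ⁻¹' s : Set (EuclideanSpace ℝ ι)) = volume s :=
  (PiLp.volume_preserving_ofLp ι).measure_preimage hs

theorem volume_preimage_ofLp_pi_Icc (a b : ι → ℝ) :
    volume (WithLp.ofLp ⁻¹' Set.univ.pi (fun i => Set.Icc (a i) (b i)) :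
      Set (EuclideanSpace ℝ ι)) = ∏ i, ENNReal.ofReal (b i - a i) := by
  rw [volume_preimage_ofLp (MeasurableSet.univ_pi fun _ => measurableSet_Icc).nullMeasurableSet,
    volume_pi_pi]
  simp only [Real.volume_Icc]

theorem volume_closedBall_le_ofReal_two_mul_pow (x : EuclideanSpace ℝ ι) {r : ℝ} (hr : 0 ≤ r) :
    volume (Metric.closedBall x r) ≤ ENNReal.ofReal ((2 * r) ^ Fintype.card ι) :=
  calc volume (Metric.closedBall x r)
      ≤ volume (WithLp.ofLp ⁻¹' Metric.closedBall (WithLp.ofLp x) r) :=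
        measure_mono <| Set.mapsTo_iff_subset_preimage.1 <| by
          simpa using (PiLp.lipschitzWith_ofLp 2 _).mapsTo_closedBall x r
    _ = ENNReal.ofReal ((2 * r) ^ Fintype.card ι) := by
      rw [volume_preimage_ofLp measurableSet_closedBall.nullMeasurableSet,
        Real.volume_pi_closedBall _ hr, ENNReal.ofReal_pow (by positivity)]

end EuclideanSpace

theorem exists_Icc_add_mem_subset_unitInterval {u s : ℝ} (hu : u ∈ Set.Icc (0 : ℝ) 1)
    (hs₀ : 0 ≤ s) (hs₁ : s ≤ 1) :
    ∃ a, u ∈ Set.Icc a (a + s) ∧ Set.Icc a (a + s) ⊆ Set.Icc 0 1 := by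
  refine ⟨min u (1 - s), ⟨min_le_left _ _, ?_⟩,
    Set.Icc_subset_Icc (le_min hu.1 (by linarith)) (by linarith [min_le_right u (1 - s)])⟩
  rcases min_cases u (1 - s) with h | h <;> linarith [hu.2]

theorem ofReal_div_sqrt_pow_le_volume_Gset {d : ℕ} {u v : EuclideanSpace ℝ (Fin d)}
    (hu : u ∈ unitCube d) (hv : v ∈ unitCube d) :
    ENNReal.ofReal ((‖v - u‖ / √d) ^ d) ≤ volume (Gset u v) := by
  simp only [unitCube, Set.mem_preimage, Set.mem_univ_pi] at hu hv
  set r := ‖v - u‖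
  set s := r / √d
  have hr : r ≤ √d := by
    simpa [r, dist_eq_norm] using EuclideanSpace.dist_le_sqrt_card_mul zero_le_one fun i =>
      Real.dist_le_of_mem_Icc_01 (hv i) (hu i)
  have hs₀ : 0 ≤ s := by positivity
  have hsr : √d * s ≤ r := by
    rw [mul_div_left_comm]
    exact mul_le_of_le_one_right (norm_nonneg _) (div_self_le_one _)
  choose a hua hsub using fun i =>
    exists_Icc_add_mem_subset_unitInterval (hu i) hs₀ (div_le_one_of_le₀ hr (Real.sqrt_nonneg _))
  have hbox : WithLp.ofLp ⁻¹' Set.univ.pi (fun i => Set.Icc (a i) (a i + s)) ⊆ Gset u v := by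
    intro x hx
    simp only [Set.mem_preimage, Set.mem_univ_pi] at hx
    refine ⟨?_, fun i _ => hsub i (hx i)⟩
    rw [Hset, Metric.mem_closedBall]
    refine le_trans ?_ hsr
    simpa using EuclideanSpace.dist_le_sqrt_card_mul hs₀ fun i =>
      (Real.dist_le_of_mem_Icc (hx i) (hua i)).trans_eq (add_sub_cancel_left _ _)
  calc ENNReal.ofReal (s ^ d)
      = volume (WithLp.ofLp ⁻¹' Set.univ.pi (fun i => Set.Icc (a i) (a i + s))) := by
        rw [EuclideanSpace.volume_preimage_ofLp_pi_Icc]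
        simp [ENNReal.ofReal_pow hs₀]
    _ ≤ volume (Gset u v) := measure_mono hbox

theorem two_rpow_neg_two_mul_mul_natCast_rpow_neg_div_two_le (d : ℕ) :
    (2 : ℝ) ^ (-(2 * (d : ℝ))) * (d : ℝ) ^ (-((d : ℝ) / 2)) ≤ ((2 * √d) ^ d)⁻¹ := by
  have h2 : (2 : ℝ) ^ (-(2 * (d : ℝ))) ≤ ((2 : ℝ) ^ d)⁻¹ := by
    rw [← Real.rpow_natCast, ← Real.rpow_neg zero_le_two]
    exact Real.rpow_le_rpow_of_exponent_le one_le_two (by linarith [d.cast_nonneg (α := ℝ)])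
  have hd : (d : ℝ) ^ (-((d : ℝ) / 2)) = (√d ^ d)⁻¹ := by
    rw [Real.rpow_neg d.cast_nonneg, Real.sqrt_eq_rpow, ← Real.rpow_natCast,
      ← Real.rpow_mul d.cast_nonneg, one_div_mul_eq_div]
  rw [hd, mul_pow, mul_inv]
  gcongr

theorem natCast_rpow_neg_div_two_pos (d : ℕ) : 0 < (d : ℝ) ^ (-((d : ℝ) / 2)) := by
  rcases d.eq_zero_or_pos with rfl | hd
  · simp
  · exact Real.rpow_pos_of_pos (Nat.cast_pos.2 hd) _

theorem Gset_volume_lower_bound_general (d : ℕ) :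
    0 < min (((2 : ℝ) ^ d)⁻¹) ((2 : ℝ) ^ (-(2 * (d : ℝ))) * (d : ℝ) ^ (-((d : ℝ) / 2))) ∧
      ∀ u ∈ unitCube d, ∀ v ∈ unitCube d,
        min (((2 : ℝ) ^ d)⁻¹) ((2 : ℝ) ^ (-(2 * (d : ℝ))) * (d : ℝ) ^ (-((d : ℝ) / 2))) *
            (volume (Hset u v)).toReal ≤ (volume (Gset u v)).toReal := by
  set c := min (((2 : ℝ) ^ d)⁻¹) ((2 : ℝ) ^ (-(2 * (d : ℝ))) * (d : ℝ) ^ (-((d : ℝ) / 2)))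
  have hc : c ≤ ((2 * √d) ^ d)⁻¹ :=
    (min_le_right _ _).trans (two_rpow_neg_two_mul_mul_natCast_rpow_neg_div_two_le d)
  refine ⟨lt_min (by positivity) (mul_pos (by positivity) (natCast_rpow_neg_div_two_pos d)),
    fun u hu v hv => ?_⟩
  have hH : volume (Hset u v) ≤ ENNReal.ofReal ((2 * ‖v - u‖) ^ d) :=
    (EuclideanSpace.volume_closedBall_le_ofReal_two_mul_pow u (norm_nonneg _)).trans_eq
      (by rw [Fintype.card_fin])
  have hG : volume (Gset u v) ≠ ⊤ :=
    ((measure_mono Set.inter_subset_left).trans_lt measure_closedBall_lt_top).ne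
  calc c * (volume (Hset u v)).toReal
      ≤ ((2 * √d) ^ d)⁻¹ * (2 * ‖v - u‖) ^ d :=
        mul_le_mul hc (ENNReal.toReal_le_of_le_ofReal (by positivity) hH)
          ENNReal.toReal_nonneg (by positivity)
    _ = (‖v - u‖ / √d) ^ d := by
        rw [← div_eq_inv_mul, ← div_pow, mul_div_mul_left _ _ two_ne_zero]
    _ ≤ (volume (Gset u v)).toReal :=
        (ENNReal.ofReal_le_iff_le_toReal hG).1 (ofReal_div_sqrt_pow_le_volume_Gset hu hv)

/-- Lemma: with `e₃ := min{2^{-d}, 2^{-2d} d^{-d/2}} > 0` (a constant depending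
only on `d`), for all `u, v ∈ [0,1]^d` one has `vol[G(u,v)] ≥ e₃ · vol[H(u,v)]`. -/
theorem Gset_volume_lower_bound (d : ℕ) (hd : 0 < d) :
    0 < min (((2 : ℝ) ^ d)⁻¹) ((2 : ℝ) ^ (-(2 * (d : ℝ))) * (d : ℝ) ^ (-((d : ℝ) / 2))) ∧
      ∀ u ∈ unitCube d, ∀ v ∈ unitCube d,
        min (((2 : ℝ) ^ d)⁻¹) ((2 : ℝ) ^ (-(2 * (d : ℝ))) * (d : ℝ) ^ (-((d : ℝ) / 2))) *
            (volume (Hset u v)).toReal ≤ (volume (Gset u v)).toReal :=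
  Gset_volume_lower_bound_general d
end

section
/- Let 1 < p ≤ 2 and C > 0, let m : ℝ^d → ℝ be (p,C)-smooth, let m_s denote the partial derivative of m with respect to the s-th coordinate, and let L > 0 satisfy max_{1 ≤ s ≤ d} sup_{x ∈ [0,1]^d} |m_s(x)| ≤ L. Then for any x, z_1, …, z_k ∈ [0,1]^d, ( Σ_{i=1}^k (m(z_i) − m(x)) )² ≤ 2kdC² Σ_{i=1}^k ‖z_i − x‖^{2p} + 2dL² Σ_{i=1}^k ‖z_i − x‖² + 2dL² Σ_{s=1}^d Σ_{1 ≤ i ≠ j ≤ k} (z_i^{(s)} − x^{(s)})(z_j^{(s)} − x^{(s)}), where the superscript (s) denotes the s-th coordinate. -/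
/-! Subtract the first-order Taylor polynomial at `x`. Moving from `x` to `z` one coordinate at a
time and applying the mean value theorem on each segment, the Hölder bound on the partial
derivatives gives `|m z - m x - ∑ₛ (zₛ - xₛ) mₛ(x)| ≤ C ‖z - x‖^(p-1) ∑ₛ |zₛ - xₛ|`, whose square is
at most `d C² ‖z - x‖^(2p)`. The linear parts add up to `∑ₛ mₛ(x) Vₛ` with
`Vₛ = ∑ᵢ (zᵢ⁽ˢ⁾ - x⁽ˢ⁾)`, and expanding `Vₛ²` gives the diagonal and off-diagonal terms;
`(a + b)² ≤ 2 (a² + b²)` and Cauchy–Schwarz finish the proof. -/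

open MeasureTheory Finset

/-- The permutation rearranging `X 0, …, X (n-1)` in ascending order of distance to `x`,
with ties broken by index: `X (nnPerm x X 0)` is the nearest neighbor of `x`, etc. -/
noncomputable def nnPerm {d n : ℕ} (x : EuclideanSpace ℝ (Fin d))
    (X : Fin n → EuclideanSpace ℝ (Fin d)) : Equiv.Perm (Fin n) :=
  Tuple.sort (fun i => toLex (‖X i - x‖, i))

/-- The indices `{0, …, k-1}` as a finset of `Fin n`. -/
def firstK (n k : ℕ) : Finset (Fin n) := Finset.univ.filter fun i => (i : ℕ) < k

section LineDerivative

variable {E : Type*} [NormedAddCommGroup E] [NormedSpace ℝ E] {f f' : E → ℝ} {v : E}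

theorem hasDerivAt_comp_add_smul_of_hasLineDerivAt (hf : ∀ y, HasLineDerivAt ℝ f (f' y) y v)
    (w : E) (t : ℝ) : HasDerivAt (fun u : ℝ => f (w + u • v)) (f' (w + t • v)) t := by
  have h : HasDerivAt (fun u : ℝ => f (w + t • v + u • v)) (f' (w + t • v)) (t - t) := by
    rw [sub_self]; exact hf (w + t • v)
  replace h := h.comp_sub_const t t
  exact h.congr_of_eventuallyEq (Filter.Eventually.of_forall fun u => congrArg f (by module))

theorem exists_abs_le_sub_eq_mul_of_hasLineDerivAt (hf : ∀ y, HasLineDerivAt ℝ f (f' y) y v)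
    (w : E) (t : ℝ) : ∃ c, |c| ≤ |t| ∧ f (w + t • v) - f w = t * f' (w + c • v) := by
  have hφ : ∀ u : ℝ, HasDerivAt (fun u : ℝ => f (w + u • t • v)) (t * f' (w + u • t • v)) u :=
    hasDerivAt_comp_add_smul_of_hasLineDerivAt (fun y => (hf y).smul t) w
  obtain ⟨u, hu, hslope⟩ := exists_hasDerivAt_eq_slope _ _ zero_lt_one
    (fun u _ => (hφ u).continuousAt.continuousWithinAt) fun u _ => hφ u
  refine ⟨u * t, ?_, ?_⟩
  · rw [abs_mul, abs_of_pos hu.1]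
    exact mul_le_of_le_one_left (abs_nonneg t) hu.2.le
  · rw [mul_smul, hslope]
    simp

end LineDerivative

theorem EuclideanSpace.norm_le_norm_of_abs_le {ι : Type*} [Fintype ι]
    {a b : EuclideanSpace ℝ ι} (h : ∀ i, |a i| ≤ |b i|) : ‖a‖ ≤ ‖b‖ := by
  refine le_of_sq_le_sq ?_ (norm_nonneg b)
  simp only [EuclideanSpace.real_norm_sq_eq]
  exact sum_le_sum fun i _ => sq_le_sq.mpr (h i)

theorem sq_sum_abs_le_card_mul_sq_norm {ι : Type*} [Fintype ι] (v : EuclideanSpace ℝ ι) :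
    (∑ i, |v i|) ^ 2 ≤ Fintype.card ι * ‖v‖ ^ 2 := by
  simpa [EuclideanSpace.real_norm_sq_eq] using
    sq_sum_le_card_mul_sum_sq (s := univ) (f := fun i => |v i|)

theorem sq_sum_eq_sum_sq_add_sum_offDiag {ι R : Type*} [DecidableEq ι] [CommSemiring R]
    (s : Finset ι) (f : ι → R) :
    (∑ i ∈ s, f i) ^ 2 = ∑ i ∈ s, f i ^ 2 + ∑ q ∈ s.offDiag, f q.1 * f q.2 := by
  rw [sq, sum_mul_sum, ← sum_product', ← diag_union_offDiag,
    sum_union (disjoint_diag_offDiag _), sum_diag]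
  simp only [sq]

theorem Real.rpow_sub_one_sq_mul_sq {a p : ℝ} (ha : 0 ≤ a) (hp : 1 ≤ p) :
    (a ^ (p - 1)) ^ 2 * a ^ 2 = a ^ (2 * p) := by
  rw [← Real.rpow_mul_natCast ha, ← Real.rpow_natCast a 2,
    ← Real.rpow_add' ha (by push_cast; linarith)]
  congr 1
  push_cast
  ring

section Staircase

variable {d : ℕ} (x z : EuclideanSpace ℝ (Fin d))

def staircase (j : ℕ) : EuclideanSpace ℝ (Fin d) :=
  WithLp.toLp 2 fun t => if (t : ℕ) < j then z t else x t

@[simp]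
theorem staircase_apply (j : ℕ) (t : Fin d) :
    staircase x z j t = if (t : ℕ) < j then z t else x t :=
  rfl

theorem staircase_succ (s : Fin d) :
    staircase x z (s + 1) = staircase x z s + (z s - x s) • EuclideanSpace.single s 1 := by
  ext t
  rcases lt_trichotomy t s with h | rfl | h
  · simp [h, h.ne, Nat.lt_succ_of_lt (Fin.lt_def.mp h)]
  · simp
  · have hst : (s : ℕ) < t := h
    simp [h.ne', not_lt.mpr hst.le, not_lt.mpr (Nat.succ_le_of_lt hst)]

theorem sub_eq_sum_sub_staircase {F : Type*} [AddCommGroup F]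
    (m : EuclideanSpace ℝ (Fin d) → F) :
    m z - m x = ∑ s : Fin d, (m (staircase x z (s + 1)) - m (staircase x z s)) := by
  have h0 : staircase x z 0 = x := by ext t; simp
  have hd : staircase x z d = z := by ext t; simp
  rw [Fin.sum_univ_eq_sum_range (fun j => m (staircase x z (j + 1)) - m (staircase x z j)),
    sum_range_sub (fun j => m (staircase x z j)), h0, hd]

theorem abs_staircase_add_single_sub_le (s : Fin d) {c : ℝ} (hc : |c| ≤ |z s - x s|)
    (t : Fin d) :
    |(staircase x z s + c • EuclideanSpace.single s 1 - x : EuclideanSpace ℝ (Fin d)) t| ≤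
      |(z - x) t| := by
  rcases lt_trichotomy t s with h | rfl | h
  · simp [h, h.ne]
  · simpa using hc
  · simp [h.ne', not_lt.mpr (Fin.lt_def.mp h).le]

end Staircase

section HolderRemainder

variable {d : ℕ} {m : EuclideanSpace ℝ (Fin d) → ℝ} {g : Fin d → EuclideanSpace ℝ (Fin d) → ℝ}
  {C : ℝ}

theorem abs_sub_sub_sum_mul_partial_le {r : ℝ} (hC : 0 ≤ C) (hr : 0 ≤ r)
    (hderiv : ∀ s y, HasLineDerivAt ℝ m (g s y) y (EuclideanSpace.single s 1))
    (hHolder : ∀ s y w, |g s y - g s w| ≤ C * ‖y - w‖ ^ r) (x z : EuclideanSpace ℝ (Fin d)) :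
    |m z - m x - ∑ s, (z s - x s) * g s x| ≤ (∑ s, |z s - x s|) * (C * ‖z - x‖ ^ r) := by
  have hstep : ∀ s : Fin d, ∃ ξ : EuclideanSpace ℝ (Fin d), ‖ξ - x‖ ≤ ‖z - x‖ ∧
      m (staircase x z (s + 1)) - m (staircase x z s) = (z s - x s) * g s ξ := by
    intro s
    obtain ⟨c, hc, hmvt⟩ :=
      exists_abs_le_sub_eq_mul_of_hasLineDerivAt (hderiv s) (staircase x z s) (z s - x s)
    exact ⟨_, EuclideanSpace.norm_le_norm_of_abs_le (abs_staircase_add_single_sub_le x z s hc),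
      by rw [staircase_succ, hmvt]⟩
  choose ξ hξ hmξ using hstep
  rw [sub_eq_sum_sub_staircase x z m, ← sum_sub_distrib, sum_mul]
  refine (abs_sum_le_sum_abs _ _).trans (sum_le_sum fun s _ => ?_)
  rw [hmξ s, ← mul_sub, abs_mul]
  gcongr
  exact (hHolder s (ξ s) x).trans (by gcongr; exact hξ s)

theorem sq_sub_sub_sum_mul_partial_le {p : ℝ} (hC : 0 ≤ C) (hp : 1 ≤ p)
    (hderiv : ∀ s y, HasLineDerivAt ℝ m (g s y) y (EuclideanSpace.single s 1))
    (hHolder : ∀ s y w, |g s y - g s w| ≤ C * ‖y - w‖ ^ (p - 1))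
    (x z : EuclideanSpace ℝ (Fin d)) :
    (m z - m x - ∑ s, (z s - x s) * g s x) ^ 2 ≤ d * C ^ 2 * ‖z - x‖ ^ (2 * p) := by
  have hremainder := abs_sub_sub_sum_mul_partial_le hC (sub_nonneg.mpr hp) hderiv hHolder x z
  have hsum : (∑ s, |z s - x s|) ^ 2 ≤ d * ‖z - x‖ ^ 2 := by
    simpa using sq_sum_abs_le_card_mul_sq_norm (z - x)
  calc (m z - m x - ∑ s, (z s - x s) * g s x) ^ 2
      = |m z - m x - ∑ s, (z s - x s) * g s x| ^ 2 := (sq_abs _).symm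
    _ ≤ ((∑ s, |z s - x s|) * (C * ‖z - x‖ ^ (p - 1))) ^ 2 := by gcongr
    _ = (∑ s, |z s - x s|) ^ 2 * C ^ 2 * (‖z - x‖ ^ (p - 1)) ^ 2 := by ring
    _ ≤ d * ‖z - x‖ ^ 2 * C ^ 2 * (‖z - x‖ ^ (p - 1)) ^ 2 := by gcongr
    _ = d * C ^ 2 * ‖z - x‖ ^ (2 * p) := by
      rw [← Real.rpow_sub_one_sq_mul_sq (norm_nonneg _) hp]; ring

end HolderRemainder

theorem sq_sum_mul_le_card_mul_sq_mul_sum_sq {ι : Type*} [Fintype ι] {a : ι → ℝ} {L : ℝ}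
    (ha : ∀ i, |a i| ≤ L) (b : ι → ℝ) :
    (∑ i, a i * b i) ^ 2 ≤ Fintype.card ι * L ^ 2 * ∑ i, b i ^ 2 := by
  calc (∑ i, a i * b i) ^ 2 ≤ Fintype.card ι * ∑ i, (a i * b i) ^ 2 := by
        simpa using sq_sum_le_card_mul_sum_sq (s := univ) (f := fun i => a i * b i)
    _ ≤ Fintype.card ι * ∑ i, L ^ 2 * b i ^ 2 := by
        gcongr with i
        rw [mul_pow, ← sq_abs (a i)]
        gcongr
        exact ha i
    _ = Fintype.card ι * L ^ 2 * ∑ i, b i ^ 2 := by rw [← mul_sum, mul_assoc]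

theorem smooth_bias_bound_general (d k : ℕ) (p C L : ℝ) (hp₁ : 1 < p)
    (hC : 0 < C)
    (m : EuclideanSpace ℝ (Fin d) → ℝ) (g : Fin d → EuclideanSpace ℝ (Fin d) → ℝ)
    (hderiv : ∀ (s : Fin d) (x : EuclideanSpace ℝ (Fin d)),
      HasLineDerivAt ℝ m (g s x) x (EuclideanSpace.single s 1))
    (hHolder : ∀ (s : Fin d) (x z : EuclideanSpace ℝ (Fin d)),
      |g s x - g s z| ≤ C * ‖x - z‖ ^ (p - 1))
    (hLbound : ∀ s : Fin d, ∀ x ∈ unitCube d, |g s x| ≤ L)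
    (x : EuclideanSpace ℝ (Fin d)) (hx : x ∈ unitCube d)
    (z : Fin k → EuclideanSpace ℝ (Fin d)) :
    (∑ i, (m (z i) - m x)) ^ 2 ≤
      2 * (k : ℝ) * (d : ℝ) * C ^ 2 * ∑ i, ‖z i - x‖ ^ (2 * p) +
        2 * (d : ℝ) * L ^ 2 * ∑ i, ‖z i - x‖ ^ 2 +
        2 * (d : ℝ) * L ^ 2 *
          ∑ s : Fin d, ∑ q ∈ (Finset.univ : Finset (Fin k)).offDiag,
            (z q.1 s - x s) * (z q.2 s - x s) := by
  set r : Fin k → ℝ := fun i => m (z i) - m x - ∑ s, (z i s - x s) * g s x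
  set V : Fin d → ℝ := fun s => ∑ i, (z i s - x s)
  have hsplit : ∑ i, (m (z i) - m x) = ∑ i, r i + ∑ s, g s x * V s := by
    simp only [r, V, mul_sum]
    rw [sum_comm (f := fun s i => g s x * (z i s - x s)), ← sum_add_distrib]
    refine sum_congr rfl fun i _ => ?_
    simp only [mul_comm (g _ x)]
    ring
  have hr : (∑ i, r i) ^ 2 ≤ k * ∑ i, d * C ^ 2 * ‖z i - x‖ ^ (2 * p) := by
    calc (∑ i, r i) ^ 2 ≤ k * ∑ i, r i ^ 2 := by
          simpa using sq_sum_le_card_mul_sum_sq (s := univ) (f := r)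
      _ ≤ _ := by
          gcongr with i
          exact sq_sub_sub_sum_mul_partial_le hC.le hp₁.le hderiv hHolder x (z i)
  have hV : (∑ s, g s x * V s) ^ 2 ≤ d * L ^ 2 * ∑ s, V s ^ 2 := by
    simpa using sq_sum_mul_le_card_mul_sq_mul_sum_sq (fun s => hLbound s x hx) V
  have hVsq : ∑ s, V s ^ 2 = ∑ i, ‖z i - x‖ ^ 2 +
      ∑ s : Fin d, ∑ q ∈ (univ : Finset (Fin k)).offDiag, (z q.1 s - x s) * (z q.2 s - x s) := by
    simp only [V, sq_sum_eq_sum_sq_add_sum_offDiag, sum_add_distrib,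
      EuclideanSpace.real_norm_sq_eq, PiLp.sub_apply]
    rw [sum_comm]
  calc (∑ i, (m (z i) - m x)) ^ 2 ≤ 2 * ((∑ i, r i) ^ 2 + (∑ s, g s x * V s) ^ 2) := by
        rw [hsplit]; exact add_sq_le
    _ ≤ 2 * (k * ∑ i, d * C ^ 2 * ‖z i - x‖ ^ (2 * p) + d * L ^ 2 * ∑ s, V s ^ 2) := by
        gcongr
    _ = _ := by rw [hVsq, ← mul_sum]; ring

/-- if `m` is `(p,C)`-smooth with `1 < p ≤ 2` (i.e. its first-order partial
derivatives `g s = m_s` exist and are `(p-1)`-Hölder with constant `C`) and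
`max_s sup_{[0,1]^d} |m_s| ≤ L`, then for `x, z₁, …, z_k ∈ [0,1]^d`,
`(∑ᵢ (m(zᵢ) - m(x)))² ≤ 2kdC² ∑ᵢ ‖zᵢ-x‖^{2p} + 2dL² ∑ᵢ ‖zᵢ-x‖² +
  2dL² ∑ₛ ∑_{i≠j} (zᵢ⁽ˢ⁾-x⁽ˢ⁾)(zⱼ⁽ˢ⁾-x⁽ˢ⁾)`. -/
theorem smooth_bias_bound (d k : ℕ) (p C L : ℝ) (hp₁ : 1 < p) (hp₂ : p ≤ 2)
    (hC : 0 < C) (hL : 0 < L)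
    (m : EuclideanSpace ℝ (Fin d) → ℝ) (g : Fin d → EuclideanSpace ℝ (Fin d) → ℝ)
    (hderiv : ∀ (s : Fin d) (x : EuclideanSpace ℝ (Fin d)),
      HasLineDerivAt ℝ m (g s x) x (EuclideanSpace.single s 1))
    (hHolder : ∀ (s : Fin d) (x z : EuclideanSpace ℝ (Fin d)),
      |g s x - g s z| ≤ C * ‖x - z‖ ^ (p - 1))
    (hLbound : ∀ s : Fin d, ∀ x ∈ unitCube d, |g s x| ≤ L)
    (x : EuclideanSpace ℝ (Fin d)) (hx : x ∈ unitCube d)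
    (z : Fin k → EuclideanSpace ℝ (Fin d)) (hz : ∀ i, z i ∈ unitCube d) :
    (∑ i, (m (z i) - m x)) ^ 2 ≤
      2 * (k : ℝ) * (d : ℝ) * C ^ 2 * ∑ i, ‖z i - x‖ ^ (2 * p) +
        2 * (d : ℝ) * L ^ 2 * ∑ i, ‖z i - x‖ ^ 2 +
        2 * (d : ℝ) * L ^ 2 *
          ∑ s : Fin d, ∑ q ∈ (Finset.univ : Finset (Fin k)).offDiag,
            (z q.1 s - x s) * (z q.2 s - x s) :=
  smooth_bias_bound_general d k p C L hp₁ hC m g hderiv hHolder hLbound x hx z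
end
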